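/- Let X, X₁, u_i, v_i be as in the context and assume additionally that tr X = 0. Writing F̃_j(X) for the coefficient of z^j in det(I + z·X), one has F̃_{m+1}(X) = (−1)^m·Σ_{i=1}^n u_i v_i + Σ_{j=2}^{m} (−1)^{m−j}·F̃_j(X)·trS^{m+1−j}(X₁) + (−1)^m·trS^{m+1}(X₁). (Lemma 'block 2', equation (2) of the paper.) -/

import Mathlib

open Polynomial

/-- `trΛ^k(M)`: the coefficient of `z^k` in `det(I + z·M)`. -/
noncomputable def trLambda {N : ℕ} (M : Matrix (Fin N) (Fin N) ℂ) (k : ℕ) : ℂ :=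
  ((1 + (Polynomial.X : ℂ[X]) • M.map Polynomial.C).det).coeff k

/-- `trS^k(M)`: the coefficient of `t^k` in the multiplicative inverse of `det(I − t·M)`
in `ℂ[[t]]`. -/
noncomputable def trS {N : ℕ} (M : Matrix (Fin N) (Fin N) ℂ) (k : ℕ) : ℂ :=
  PowerSeries.coeff k
    ((((1 - (Polynomial.X : ℂ[X]) • M.map Polynomial.C).det : ℂ[X]) : PowerSeries ℂ)⁻¹)

/-!
Replacing `t` by `-t`, everything is phrased through `charpolyRev M = det (1 - t M)`: its `j`-th
coefficient is `(-1)^j trΛ^j(M)` and its inverse in `ℂ⟦t⟧` has coefficients `trS^j(M)`.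

In block form `X = [[X₁, u e₁ᵀ], [e_m vᵀ, X₂]]` with `X₂` lower Hessenberg, ones on its
superdiagonal. The Schur complement and the matrix determinant lemma (over `ℂ⟦t⟧`, where
`det (1 - t X₁)` and `det (1 - t X₂)` are units) give
`det (1 - t X) = det (1 - t X₁) det (1 - t X₂) - t^(m+1) Q(t)` with `Q(0) = v ⬝ u`: each
off-diagonal block contributes a factor `t`, and the corner cofactor of `1 - t X₂` is `t^(m-1)`.
Dividing by `det (1 - t X₁)` and comparing coefficients of `t^(m+1)`, where `det (1 - t X₂)` has
degree at most `m`, yields the identity after inserting `trΛ⁰ = trS⁰ = 1` and `trΛ¹ = tr X = 0`.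
-/

open Matrix
open scoped PowerSeries

namespace Matrix
variable {R : Type*} [CommRing R] {m n : Type*} [Fintype m] [Fintype n] [DecidableEq m]
  [DecidableEq n]

theorem dotProduct_adjugate_mulVec {A : Matrix m m R} (hA : IsUnit A.det) (b c : m → R) :
    c ⬝ᵥ adjugate A *ᵥ b = A.det * (c ⬝ᵥ A⁻¹ *ᵥ b) := by
  rw [← cramer_eq_adjugate_mulVec, ← det_smul_inv_mulVec_eq_cramer _ _ hA, dotProduct_smul,
    smul_eq_mul]

theorem det_sub_vecMulVec {A : Matrix m m R} (hA : IsUnit A.det) (b c : m → R) :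
    (A - vecMulVec b c).det = A.det - c ⬝ᵥ adjugate A *ᵥ b := by
  rw [sub_eq_add_neg, ← neg_vecMulVec, vecMulVec_eq Unit,
    det_add_replicateCol_mul_replicateRow hA, det_unique (1 + _), add_apply, one_apply_eq,
    ← replicateRow_vecMul, replicateRow_mul_replicateCol_apply, ← dotProduct_mulVec, mulVec_neg,
    dotProduct_neg, dotProduct_adjugate_mulVec hA]
  ring

theorem det_fromBlocks_vecMulVec {A : Matrix m m R} {D : Matrix n n R} (hA : IsUnit A.det)
    (hD : IsUnit D.det) (b c : m → R) (e f : n → R) :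
    (fromBlocks A (vecMulVec b e) (vecMulVec f c) D).det =
      A.det * D.det - (c ⬝ᵥ adjugate A *ᵥ b) * (e ⬝ᵥ adjugate D *ᵥ f) := by
  let := A.invertibleOfIsUnitDet hA
  rw [det_fromBlocks₁₁, invOf_eq_nonsing_inv, vecMulVec_mul, vecMulVec_mul_vecMulVec,
    ← dotProduct_mulVec, vecMulVec_smul, ← smul_vecMulVec, det_sub_vecMulVec hD, mulVec_smul,
    dotProduct_smul, smul_eq_mul, dotProduct_adjugate_mulVec hA]
  ring

theorem adjugate_zero_last_of_hessenberg {k : ℕ} (D : Matrix (Fin (k + 1)) (Fin (k + 1)) R)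
    (z : R) (hD₀ : ∀ a b : Fin (k + 1), (a : ℕ) + 2 ≤ b → D a b = 0)
    (hD₁ : ∀ a b : Fin (k + 1), (b : ℕ) = a + 1 → D a b = z) :
    adjugate D 0 (Fin.last k) = (-z) ^ k := by
  -- expanding along the last row, the only surviving minor is lower triangular with diagonal `z`
  rw [adjugate_apply, det_succ_row _ (Fin.last k), Finset.sum_eq_single 0]
  · have hminor : ((D.updateRow (Fin.last k) (Pi.single 0 1)).submatrix
        (Fin.last k).succAbove (0 : Fin (k + 1)).succAbove).det = z ^ k := by
      rw [det_of_isLowerTriangular]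
      · simp only [submatrix_apply, Fin.succAbove_last, Fin.succAbove_zero,
          updateRow_ne (Fin.castSucc_lt_last _).ne]
        rw [Finset.prod_congr rfl fun a _ => hD₁ a.castSucc a.succ (by simp)]
        simp
      · intro i j hij
        simp only [submatrix_apply, Fin.succAbove_last, Fin.succAbove_zero,
          updateRow_ne (Fin.castSucc_lt_last _).ne]
        have : (i : ℕ) < j := hij
        exact hD₀ _ _ (by simp only [Fin.val_castSucc, Fin.val_succ]; omega)
    rw [updateRow_self, hminor, Pi.single_eq_same, neg_pow z]
    simp
  · intro b _ hb
    rw [updateRow_self, Pi.single_eq_of_ne hb, mul_zero, zero_mul]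
  · simp

theorem charpolyRev_submatrix_equiv (e : m ≃ n) (M : Matrix n n R) :
    (M.submatrix e e).charpolyRev = M.charpolyRev := by
  rw [charpolyRev, charpolyRev, ← det_submatrix_equiv_self e]
  congr 1
  ext i j
  simp [one_apply]

theorem coe_charpolyRev (M : Matrix n n R) :
    (M.charpolyRev : R⟦X⟧) = det (1 - (PowerSeries.X : R⟦X⟧) • M.map PowerSeries.C) := by
  rw [charpolyRev, ← Polynomial.coeToPowerSeries.ringHom_apply, RingHom.map_det]
  congr 1
  ext i j
  by_cases h : i = j <;> simp [h, PowerSeries.X_mul]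

theorem constantCoeff_mapMatrix_one_sub_X_smul (M : Matrix n n R) :
    (PowerSeries.constantCoeff (R := R)).mapMatrix
      (1 - (PowerSeries.X : R⟦X⟧) • M.map PowerSeries.C) = 1 := by
  ext i j
  by_cases h : i = j <;> simp [one_apply, h]

theorem isUnit_det_one_sub_X_smul (M : Matrix n n R) :
    IsUnit (det (1 - (PowerSeries.X : R⟦X⟧) • M.map PowerSeries.C)) := by
  rw [PowerSeries.isUnit_iff_constantCoeff, RingHom.map_det,
    constantCoeff_mapMatrix_one_sub_X_smul, det_one]
  exact isUnit_one

theorem constantCoeff_comp_C_dotProduct_adjugate_mulVec (M : Matrix n n R) (u v : n → R) :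
    PowerSeries.constantCoeff ((PowerSeries.C ∘ v) ⬝ᵥ
      adjugate (1 - (PowerSeries.X : R⟦X⟧) • M.map PowerSeries.C) *ᵥ (PowerSeries.C ∘ u)) =
      v ⬝ᵥ u := by
  rw [RingHom.map_dotProduct]
  congr 1
  funext i
  rw [Function.comp_apply, RingHom.map_mulVec, ← RingHom.mapMatrix_apply, RingHom.map_adjugate,
    constantCoeff_mapMatrix_one_sub_X_smul, adjugate_one, one_mulVec]
  simp

theorem exists_charpolyRev_fromBlocks_hessenberg {k : ℕ} (A : Matrix m m R)
    (H : Matrix (Fin (k + 1)) (Fin (k + 1)) R)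
    (hH₀ : ∀ a b : Fin (k + 1), (a : ℕ) + 2 ≤ b → H a b = 0)
    (hH₁ : ∀ a b : Fin (k + 1), (b : ℕ) = a + 1 → H a b = 1) (u v : m → R) :
    ∃ Q : R⟦X⟧, PowerSeries.constantCoeff Q = v ⬝ᵥ u ∧
      ((fromBlocks A (vecMulVec u (Pi.single 0 1)) (vecMulVec (Pi.single (Fin.last k) 1) v)
          H).charpolyRev : R⟦X⟧) =
        (A.charpolyRev : R⟦X⟧) * (H.charpolyRev : R⟦X⟧) - PowerSeries.X ^ (k + 2) * Q := by
  set P := 1 - (PowerSeries.X : R⟦X⟧) • A.map PowerSeries.C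
  set D := 1 - (PowerSeries.X : R⟦X⟧) • H.map PowerSeries.C
  let u' := PowerSeries.C ∘ u
  let v' := PowerSeries.C ∘ v
  refine ⟨_, constantCoeff_comp_C_dotProduct_adjugate_mulVec A u v, ?_⟩
  have hblocks : 1 - (PowerSeries.X : R⟦X⟧) • (fromBlocks A (vecMulVec u (Pi.single 0 1))
        (vecMulVec (Pi.single (Fin.last k) 1) v) H).map PowerSeries.C =
      fromBlocks P (vecMulVec ((-PowerSeries.X : R⟦X⟧) • u') (Pi.single 0 1))
        (vecMulVec (Pi.single (Fin.last k) 1) ((-PowerSeries.X : R⟦X⟧) • v')) D := by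
    ext (i | i) (j | j) <;>
      simp [P, D, u', v', one_apply, vecMulVec_apply, mul_comm, Pi.single_apply,
        apply_ite PowerSeries.C]
  have hcorner :
      Pi.single 0 1 ⬝ᵥ adjugate D *ᵥ Pi.single (Fin.last k) 1 = PowerSeries.X ^ k := by
    have hne {a b : Fin (k + 1)} (h : (a : ℕ) ≠ b) : (1 : Matrix _ _ R⟦X⟧) a b = 0 :=
      one_apply_ne (Fin.ne_of_val_ne h)
    have := adjugate_zero_last_of_hessenberg D (-PowerSeries.X)
      (fun a b hab => by simp [D, hne (by omega : (a : ℕ) ≠ b), hH₀ a b hab])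
      (fun a b hab => by simp [D, hne (by omega : (a : ℕ) ≠ b), hH₁ a b hab])
    rw [neg_neg] at this
    rwa [single_one_dotProduct, mulVec_single_one, col_apply]
  rw [coe_charpolyRev, coe_charpolyRev, coe_charpolyRev, hblocks,
    det_fromBlocks_vecMulVec (isUnit_det_one_sub_X_smul A) (isUnit_det_one_sub_X_smul H),
    hcorner, mulVec_smul, dotProduct_smul, smul_dotProduct]
  simp only [smul_eq_mul]
  ring

end Matrix

section trLambda

variable {N : ℕ} (M : Matrix (Fin N) (Fin N) ℂ)

theorem trLambda_zero : trLambda M 0 = 1 := by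
  simp [trLambda, coeff_det_one_add_X_smul_eq_sum_minors]

theorem trLambda_one : trLambda M 1 = M.trace :=
  coeff_det_one_add_X_smul_one M

theorem trLambda_eq_zero_of_lt {k : ℕ} (hk : N < k) : trLambda M k = 0 := by
  rw [trLambda, coeff_det_one_add_X_smul_eq_sum_minors,
    Finset.powersetCard_eq_empty.mpr (by simpa using hk), Finset.sum_empty]

theorem coeff_charpolyRev_eq_neg_one_pow_mul_trLambda (k : ℕ) :
    M.charpolyRev.coeff k = (-1) ^ k * trLambda M k := by
  have : M.charpolyRev = det (1 + (X : ℂ[X]) • (-M).map C) := by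
    rw [charpolyRev, sub_eq_add_neg, ← smul_neg, ← Matrix.map_neg _ (map_neg C)]
  rw [this, trLambda, coeff_det_one_add_X_smul_eq_sum_minors,
    coeff_det_one_add_X_smul_eq_sum_minors, Finset.mul_sum]
  refine Finset.sum_congr rfl fun s hs => ?_
  simp only [submatrix_neg, Pi.neg_apply, det_neg, Fintype.card_coe,
    (Finset.mem_powersetCard.mp hs).2]

theorem trS_eq_coeff_inv_charpolyRev (k : ℕ) :
    trS M k = PowerSeries.coeff k (M.charpolyRev : ℂ⟦X⟧)⁻¹ :=
  rfl

theorem trS_zero : trS M 0 = 1 := by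
  rw [trS_eq_coeff_inv_charpolyRev, PowerSeries.coeff_zero_eq_constantCoeff_apply,
    PowerSeries.constantCoeff_inv, Polynomial.constantCoeff_coe, coeff_zero_eq_eval_zero,
    eval_charpolyRev, inv_one]

end trLambda

theorem coeff_charpolyRev_mul_inv_charpolyRev {N K : ℕ} (M : Matrix (Fin N) (Fin N) ℂ)
    (A : Matrix (Fin K) (Fin K) ℂ) (k : ℕ) :
    PowerSeries.coeff k ((M.charpolyRev : ℂ⟦X⟧) * (A.charpolyRev : ℂ⟦X⟧)⁻¹) =
      ∑ j ∈ Finset.range (k + 1), (-1) ^ j * trLambda M j * trS A (k - j) := by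
  rw [PowerSeries.coeff_mul, Finset.Nat.sum_antidiagonal_eq_sum_range_succ_mk]
  simp only [Polynomial.coeff_coe, coeff_charpolyRev_eq_neg_one_pow_mul_trLambda,
    trS_eq_coeff_inv_charpolyRev]

theorem sum_trLambda_mul_trS_eq_neg_constantCoeff {N K L : ℕ} (M : Matrix (Fin N) (Fin N) ℂ)
    (A : Matrix (Fin K) (Fin K) ℂ) (H : Matrix (Fin L) (Fin L) ℂ) (Q : ℂ⟦X⟧)
    (h : (M.charpolyRev : ℂ⟦X⟧) =
      (A.charpolyRev : ℂ⟦X⟧) * (H.charpolyRev : ℂ⟦X⟧) - PowerSeries.X ^ (L + 1) * Q) :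
    ∑ j ∈ Finset.range (L + 2), (-1) ^ j * trLambda M j * trS A (L + 1 - j) =
      -PowerSeries.constantCoeff Q := by
  have hA : PowerSeries.constantCoeff (A.charpolyRev : ℂ⟦X⟧) = 1 := by
    rw [Polynomial.constantCoeff_coe, coeff_zero_eq_eval_zero, eval_charpolyRev]
  have hAinv : (A.charpolyRev : ℂ⟦X⟧) * (A.charpolyRev : ℂ⟦X⟧)⁻¹ = 1 :=
    PowerSeries.mul_inv_cancel _ (by simp [hA])
  rw [← coeff_charpolyRev_mul_inv_charpolyRev, h, sub_mul, mul_right_comm, hAinv, one_mul,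
    map_sub, Polynomial.coeff_coe, coeff_charpolyRev_eq_neg_one_pow_mul_trLambda,
    trLambda_eq_zero_of_lt H (by omega), mul_zero, zero_sub, mul_assoc,
    PowerSeries.coeff_X_pow_mul', if_pos le_rfl, Nat.sub_self,
    PowerSeries.coeff_zero_eq_constantCoeff_apply, map_mul, PowerSeries.constantCoeff_inv, hA,
    inv_one, mul_one]

theorem eq_of_sum_range_neg_one_pow_mul_eq {R : Type*} [CommRing R] {a b : ℕ → R} {c : R}
    {m : ℕ} (hm : 1 ≤ m) (ha₀ : a 0 = 1) (ha₁ : a 1 = 0) (hb₀ : b 0 = 1)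
    (h : ∑ j ∈ Finset.range (m + 2), (-1) ^ j * a j * b (m + 1 - j) = -c) :
    a (m + 1) = (-1) ^ m * c + ∑ j ∈ Finset.Icc 2 m, (-1) ^ (m - j) * a j * b (m + 1 - j) +
      (-1) ^ m * b (m + 1) := by
  have hsq (i : ℕ) : ((-1 : R) ^ i) * (-1) ^ i = 1 := by rw [← mul_pow]; simp
  have hmid : ∑ j ∈ Finset.Icc 2 m, (-1) ^ (m - j) * a j * b (m + 1 - j) =
      (-1) ^ m * ∑ j ∈ Finset.Ico 2 (m + 1), (-1) ^ j * a j * b (m + 1 - j) := by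
    rw [← Finset.Ico_add_one_right_eq_Icc, Finset.mul_sum]
    refine Finset.sum_congr rfl fun j hj => ?_
    rw [← pow_sub_mul_pow (-1 : R) (by simp at hj; omega : j ≤ m)]
    linear_combination (-1) ^ (m - j) * a j * b (m + 1 - j) * (hsq j).symm
  rw [Finset.sum_range_succ, ← Finset.sum_range_add_sum_Ico _ (by omega : 2 ≤ m + 1)] at h
  simp only [Finset.sum_range_succ, Finset.sum_range_zero, ha₀, ha₁, hb₀, Nat.sub_zero,
    Nat.sub_self] at h
  rw [hmid]
  linear_combination (-(-1) ^ m) * h - a (m + 1) * hsq m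

theorem submatrix_finSumFinEquiv_eq_fromBlocks {α : Type*} [MulZeroOneClass α] {n k : ℕ}
    (M : Matrix (Fin (n + (k + 1))) (Fin (n + (k + 1))) α) (A : Matrix (Fin n) (Fin n) α)
    (u v : Fin n → α)
    (hB : ∀ i j : Fin (n + (k + 1)), i.val < n → n + 1 ≤ j.val → M i j = 0)
    (hC : ∀ i j : Fin (n + (k + 1)), n ≤ i.val → i.val < n + k → j.val < n → M i j = 0)
    (hA : ∀ i j, A i j = M (Fin.castAdd _ i) (Fin.castAdd _ j))
    (hu : ∀ i, u i = M (Fin.castAdd _ i) (Fin.natAdd n 0))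
    (hv : ∀ i, v i = M (Fin.natAdd n (Fin.last k)) (Fin.castAdd _ i)) :
    M.submatrix finSumFinEquiv finSumFinEquiv =
      fromBlocks A (vecMulVec u (Pi.single 0 1)) (vecMulVec (Pi.single (Fin.last k) 1) v)
        (M.submatrix (Fin.natAdd n) (Fin.natAdd n)) := by
  ext (i | a) (j | b)
  · simp [hA]
  · by_cases hb : b = 0
    · subst hb
      simp [vecMulVec_apply, ← hu]
    · have : 0 < (b : ℕ) := Fin.pos_of_ne_zero hb
      simp only [submatrix_apply, finSumFinEquiv_apply_left, finSumFinEquiv_apply_right,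
        fromBlocks_apply₁₂, vecMulVec_apply, Pi.single_eq_of_ne hb, mul_zero]
      exact hB _ _ (by simp) (by simp; omega)
  · by_cases ha : a = Fin.last k
    · subst ha
      simp only [submatrix_apply, finSumFinEquiv_apply_left, finSumFinEquiv_apply_right,
        fromBlocks_apply₂₁, vecMulVec_apply, Pi.single_eq_same, one_mul, ← hv]
    · have : (a : ℕ) < k := Fin.val_lt_last ha
      simp only [submatrix_apply, finSumFinEquiv_apply_left, finSumFinEquiv_apply_right,
        fromBlocks_apply₂₁, vecMulVec_apply, Pi.single_eq_of_ne ha, zero_mul]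
      exact hC _ _ (by simp) (by simp; omega) (by simp)
  · simp

theorem block2 (n m : ℕ) (hm : 2 ≤ m)
    (Xm : Matrix (Fin (n + m)) (Fin (n + m)) ℂ)
    (h1 : ∀ i j : Fin (n + m), i.val < n → n + 1 ≤ j.val → Xm i j = 0)
    (h2 : ∀ i j : Fin (n + m), n ≤ i.val → i.val < n + m - 1 → j.val < n → Xm i j = 0)
    (h3 : ∀ i j : Fin (n + m), n ≤ i.val → n ≤ j.val → i.val + 2 ≤ j.val → Xm i j = 0)
    (h4 : ∀ i j : Fin (n + m), n ≤ i.val → j.val = i.val + 1 → Xm i j = 1)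
    (htr : Xm.trace = 0)
    (X₁ : Matrix (Fin n) (Fin n) ℂ)
    (hX₁ : ∀ i j : Fin n, X₁ i j = Xm (Fin.castLE (by omega) i) (Fin.castLE (by omega) j))
    (u v : Fin n → ℂ)
    (hu : ∀ i : Fin n, u i = Xm (Fin.castLE (by omega) i) ⟨n, by omega⟩)
    (hv : ∀ i : Fin n, v i = Xm ⟨n + m - 1, by omega⟩ (Fin.castLE (by omega) i)) :
    trLambda Xm (m + 1) =
      (-1 : ℂ) ^ m * ∑ i : Fin n, u i * v i +
        ∑ j ∈ Finset.Icc 2 m, (-1 : ℂ) ^ (m - j) * trLambda Xm j * trS X₁ (m + 1 - j) +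
        (-1 : ℂ) ^ m * trS X₁ (m + 1) := by
  obtain ⟨k, rfl⟩ : ∃ k, m = k + 1 := ⟨m - 1, by omega⟩
  have hblocks := submatrix_finSumFinEquiv_eq_fromBlocks Xm X₁ u v h1
    (fun i j hi hik hj => h2 i j hi (by omega) hj) hX₁ hu hv
  obtain ⟨Q, hQ₀, hQ⟩ := exists_charpolyRev_fromBlocks_hessenberg X₁
    (Xm.submatrix (Fin.natAdd n) (Fin.natAdd n))
    (fun a b hab => h3 _ _ (by simp) (by simp) (by simp; omega))
    (fun a b hab => h4 _ _ (by simp) (by simp; omega)) u v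
  rw [← hblocks, charpolyRev_submatrix_equiv] at hQ
  have hsum := sum_trLambda_mul_trS_eq_neg_constantCoeff Xm X₁ _ Q hQ
  rw [hQ₀, dotProduct_comm] at hsum
  exact eq_of_sum_range_neg_one_pow_mul_eq (by omega) (trLambda_zero Xm)
    (by rw [trLambda_one, htr]) (trS_zero X₁) hsum
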